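/- arXiv:1203.2209 — 2 statements merged into one kernel-verified Lean document; each statement's English description precedes it below -/
import Mathlib

section
/- For every integer k ≥ 3, there exists a unique μ* > 0 at which h_k(μ) = μ e^μ / f_{k−1}(μ) attains its infimum over μ > 0, and this μ* is the unique positive solution of μ^{k−1}/(k−2)! = f_{k−1}(μ). -/
open Real Finset

noncomputable def fTail (j : ℕ) (x : ℝ) : ℝ :=
  Real.exp x - ∑ i ∈ Finset.range j, x ^ i / (Nat.factorial i : ℝ)

noncomputable def hFun (k : ℕ) (μ : ℝ) : ℝ := μ * Real.exp μ / fTail (k - 1) μ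

/-!
Write `f_j(x) = x^j Q_j(x)` with `Q_j(x) = ∑ xⁱ/(i+j)!` (`fTailQuot`). Since `f_{j+1}' = f_j`,
`h_{j+2}'(x) = eˣ (Q_{j+1}(x) - 1/j!) / (x^{j+1} Q_{j+1}(x)²)`. The power series `Q_{j+1}` is
strictly increasing on `[0, ∞)`, equals `1/(j+1)! < 1/j!` at `0` and is at least `1` at `(j+2)!`,
so it takes the value `1/j!` at exactly one `c > 0`. Hence `h_{j+2}` decreases on `(0, c]` and
increases on `[c, ∞)`, and the critical equation `x^{j+1}/j! = f_{j+1}(x)` is `Q_{j+1}(x) = 1/j!`.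
-/

open Set
open scoped Nat

lemma fTail_succ (j : ℕ) (x : ℝ) : fTail (j + 1) x = fTail j x - x ^ j / j ! := by
  rw [fTail, fTail, sum_range_succ]
  ring

lemma hasDerivAt_fTail_succ (j : ℕ) (x : ℝ) : HasDerivAt (fTail (j + 1)) (fTail j x) x := by
  induction j with
  | zero =>
    have h : fTail 1 = fun y => exp y - 1 := funext fun y => by simp [fTail]
    rw [h]
    simpa [fTail] using (hasDerivAt_exp x).sub_const 1
  | succ j ih =>
    have hfun : fTail (j + 1 + 1) = fTail (j + 1) - fun y : ℝ => y ^ (j + 1) / ((j + 1)! : ℝ) :=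
      funext (fTail_succ _)
    rw [hfun, fTail_succ j x]
    refine (ih.sub ((hasDerivAt_pow (j + 1) x).div_const ((j + 1)! : ℝ))).congr_deriv ?_
    rw [Nat.factorial_succ]
    push_cast
    field_simp

noncomputable def fTailQuot (j : ℕ) (x : ℝ) : ℝ := ∑' i : ℕ, x ^ i / (i + j)!

lemma fTail_eq_pow_mul_fTailQuot (j : ℕ) (x : ℝ) : fTail j x = x ^ j * fTailQuot j x := by
  have hexp : exp x = ∑' i : ℕ, x ^ i / i ! := by
    rw [exp_eq_exp_ℝ, NormedSpace.exp_eq_tsum_div]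
  rw [fTail, hexp, ← (Real.summable_pow_div_factorial x).sum_add_tsum_nat_add j,
    add_sub_cancel_left, fTailQuot, ← tsum_mul_left]
  congr 1
  funext i
  rw [pow_add]
  ring

lemma pow_div_factorial_add_le (j i : ℕ) {x : ℝ} (hx : 0 ≤ x) :
    x ^ i / (i + j)! ≤ x ^ i / i ! :=
  div_le_div_of_nonneg_left (by positivity) (by positivity)
    (by exact_mod_cast Nat.factorial_le (by omega))

lemma summable_pow_div_factorial_add (j : ℕ) {x : ℝ} (hx : 0 ≤ x) :
    Summable fun i : ℕ => x ^ i / (i + j)! :=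
  (Real.summable_pow_div_factorial x).of_nonneg_of_le (fun _ => by positivity)
    fun i => pow_div_factorial_add_le j i hx

lemma fTailQuot_zero (j : ℕ) : fTailQuot j 0 = 1 / j ! := by
  rw [fTailQuot, tsum_eq_single 0 fun i hi => by simp [hi]]
  simp

lemma fTailQuot_strictMonoOn (j : ℕ) : StrictMonoOn (fTailQuot j) (Ici 0) := by
  intro x hx y hy hxy
  rw [Set.mem_Ici] at hx hy
  refine Summable.tsum_lt_tsum (i := 1) (fun i => ?_) ?_ (summable_pow_div_factorial_add j hx)
    (summable_pow_div_factorial_add j hy)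
  · dsimp only
    gcongr
  · simpa using div_lt_div_of_pos_right hxy (by positivity)

lemma fTailQuot_pos (j : ℕ) {x : ℝ} (hx : 0 ≤ x) : 0 < fTailQuot j x := by
  have h := (fTailQuot_strictMonoOn j).monotoneOn self_mem_Ici hx hx
  rw [fTailQuot_zero] at h
  exact lt_of_lt_of_le (by positivity) h

lemma continuousOn_fTailQuot (j : ℕ) (R : ℝ) : ContinuousOn (fTailQuot j) (Icc 0 R) :=
  continuousOn_tsum (fun i => ((continuous_pow i).div_const _).continuousOn)
    (Real.summable_pow_div_factorial R) fun i x ⟨hx₀, hxR⟩ => by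
      rw [Real.norm_eq_abs, abs_of_nonneg (by positivity)]
      exact (pow_div_factorial_add_le j i hx₀).trans (by gcongr)

lemma one_le_fTailQuot_factorial (j : ℕ) : 1 ≤ fTailQuot j (j + 1)! := by
  have h := (summable_pow_div_factorial_add j (x := (j + 1)!) (by positivity)).le_tsum 1
    fun _ _ => by positivity
  refine (le_of_eq ?_).trans h
  rw [pow_one, add_comm 1 j, div_self (by positivity)]

lemma exists_pos_fTailQuot_eq (j : ℕ) {a : ℝ} (ha₀ : 1 / j ! < a) (ha₁ : a ≤ 1) :
    ∃ c, 0 < c ∧ fTailQuot j c = a := by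
  obtain ⟨c, hc, hQc⟩ := intermediate_value_Icc (by positivity) (continuousOn_fTailQuot j _)
    ⟨(fTailQuot_zero j).trans_le ha₀.le, ha₁.trans (one_le_fTailQuot_factorial j)⟩
  refine ⟨c, hc.1.lt_of_ne ?_, hQc⟩
  rintro rfl
  rw [fTailQuot_zero] at hQc
  exact ha₀.ne hQc

lemma hasDerivAt_hFun (j : ℕ) {x : ℝ} (hx : 0 < x) :
    HasDerivAt (hFun (j + 2))
      (exp x * (fTailQuot (j + 1) x - 1 / j !) / (x ^ (j + 1) * fTailQuot (j + 1) x ^ 2)) x := by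
  have hQ := fTailQuot_pos (j + 1) hx.le
  have hf : fTail (j + 1) x ≠ 0 := by rw [fTail_eq_pow_mul_fTailQuot]; positivity
  have h := ((hasDerivAt_id x).mul (hasDerivAt_exp x)).div (hasDerivAt_fTail_succ j x) hf
  refine h.congr_deriv ?_
  rw [show fTail j x = fTail (j + 1) x + x ^ j / (j ! : ℝ) by rw [fTail_succ]; ring,
    fTail_eq_pow_mul_fTailQuot (j + 1) x]
  simp only [id_eq, Pi.mul_apply]
  field_simp
  ring

lemma hFun_strictAntiOn (j : ℕ) {c : ℝ} (hQc : fTailQuot (j + 1) c = 1 / j !) :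
    StrictAntiOn (hFun (j + 2)) (Ioc 0 c) := by
  refine strictAntiOn_of_deriv_neg (convex_Ioc 0 c)
    (fun x hx => (hasDerivAt_hFun j hx.1).continuousAt.continuousWithinAt) fun x hx => ?_
  rw [interior_Ioc] at hx
  obtain ⟨hx₀, hxc⟩ := hx
  have hQx : fTailQuot (j + 1) x < 1 / j ! :=
    hQc ▸ fTailQuot_strictMonoOn _ hx₀.le (hx₀.trans hxc).le hxc
  have := fTailQuot_pos (j + 1) hx₀.le
  rw [(hasDerivAt_hFun j hx₀).deriv]
  exact div_neg_of_neg_of_pos (mul_neg_of_pos_of_neg (exp_pos x) (by linarith)) (by positivity)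

lemma hFun_strictMonoOn (j : ℕ) {c : ℝ} (hc : 0 < c) (hQc : fTailQuot (j + 1) c = 1 / j !) :
    StrictMonoOn (hFun (j + 2)) (Ici c) := by
  refine strictMonoOn_of_deriv_pos (convex_Ici c)
    (fun x hx => (hasDerivAt_hFun j (hc.trans_le hx)).continuousAt.continuousWithinAt)
    fun x hx => ?_
  rw [interior_Ici] at hx
  have hx₀ : 0 < x := hc.trans hx
  have hQx : 1 / j ! < fTailQuot (j + 1) x :=
    hQc ▸ fTailQuot_strictMonoOn _ hc.le hx₀.le hx
  have := fTailQuot_pos (j + 1) hx₀.le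
  rw [(hasDerivAt_hFun j hx₀).deriv]
  exact div_pos (mul_pos (exp_pos x) (by linarith)) (by positivity)

lemma forall_le_iff_eq_of_strictAntiOn_of_strictMonoOn {α β : Type*} [LinearOrder α]
    [Preorder β] {f : α → β} {a c x : α} (hc : a < c) (hanti : StrictAntiOn f (Ioc a c))
    (hmono : StrictMonoOn f (Ici c)) (hx : a < x) :
    (∀ y, a < y → f x ≤ f y) ↔ x = c := by
  have hlt : ∀ y, a < y → y ≠ c → f c < f y := fun y hy hyc => by
    rcases hyc.lt_or_gt with h | h
    · exact hanti ⟨hy, h.le⟩ ⟨hc, le_rfl⟩ h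
    · exact hmono self_mem_Ici h.le h
  refine ⟨fun hmin => by_contra fun hxc => (hlt x hx hxc).not_ge (hmin c hc), ?_⟩
  rintro rfl y hy
  rcases eq_or_ne y x with rfl | hyc
  · exact le_rfl
  · exact (hlt y hy hyc).le

/-- for `k ≥ 3`, there is a unique `μ* > 0` at which `h_k` attains its
infimum over `(0, ∞)`, and this `μ*` is also the unique positive solution of
`μ^{k-1}/(k-2)! = f_{k-1}(μ)`. -/
theorem hFun_unique_minimizer (k : ℕ) (hk : 3 ≤ k) :
    (∃! μ : ℝ, 0 < μ ∧ ∀ x : ℝ, 0 < x → hFun k μ ≤ hFun k x) ∧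
    (∀ μ : ℝ, 0 < μ →
      ((∀ x : ℝ, 0 < x → hFun k μ ≤ hFun k x) ↔
        μ ^ (k - 1) / (Nat.factorial (k - 2) : ℝ) = fTail (k - 1) μ)) := by
  obtain ⟨j, hj, rfl⟩ : ∃ j, 0 < j ∧ k = j + 2 := ⟨k - 2, by omega, by omega⟩
  have hfac : (j ! : ℝ) < (j + 1)! := by exact_mod_cast (Nat.factorial_lt hj).2 j.lt_succ_self
  obtain ⟨c, hc, hQc⟩ := exists_pos_fTailQuot_eq (j + 1) (a := 1 / j !)
    (one_div_lt_one_div_of_lt (by positivity) hfac)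
    (by rw [div_le_one (by positivity)]; exact_mod_cast Nat.factorial_pos j)
  have hmin (μ : ℝ) (hμ : 0 < μ) :
      (∀ x, 0 < x → hFun (j + 2) μ ≤ hFun (j + 2) x) ↔ μ = c :=
    forall_le_iff_eq_of_strictAntiOn_of_strictMonoOn hc (hFun_strictAntiOn j hQc)
      (hFun_strictMonoOn j hc hQc) hμ
  have hcrit (μ : ℝ) (hμ : 0 < μ) : μ ^ (j + 1) / j ! = fTail (j + 1) μ ↔ μ = c := by
    rw [fTail_eq_pow_mul_fTailQuot, div_eq_mul_one_div, mul_right_inj' (by positivity), eq_comm,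
      ← hQc]
    exact (fTailQuot_strictMonoOn _).injOn.eq_iff hμ.le hc.le
  exact ⟨⟨c, ⟨hc, (hmin c hc).2 rfl⟩, fun μ hμ => (hmin μ hμ.1).1 hμ.2⟩,
    fun μ hμ => (hmin μ hμ).trans (hcrit μ hμ).symm⟩
end

section
/- Let n' ≥ n − log n, and let g_1 ≥ g_2 ≥ … ≥ g_{n'} ≥ 0 be integers with even sum, g_1 ≤ n^{1/4}, and at most k·log n of the g_j equal to 0, where k ≥ 3 is a fixed integer. If n is large enough that n − n^{1/4} − k·log n > √n, then there exists a simple graph on n' vertices with degree sequence (g_1, …, g_{n'}). -/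
open Real Finset

/-!
The sequence has maximum `Δ ≤ n^{1/4}` and `m ≥ n' - k log n > √n + n^{1/4} - log n` nonzero
entries; since `log n < (3/4) √n`, this gives `Δ² + 4Δ < 4m`. That suffices for the Erdős–Gallai
inequalities: for `ℓ > Δ` the left side is at most `ℓ(ℓ-1)`, and for `ℓ ≤ Δ` it is at most
`ℓΔ ≤ ℓ(ℓ-1) + (m - ℓ)` because `ℓ(Δ + 2 - ℓ) ≤ (Δ + 2)² / 4`.

The Erdős–Gallai inequalities are sufficient by the Havel–Hakimi induction on the degree sum: join
the vertex of largest degree `r` to `r` vertices of largest remaining degree, breaking ties so that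
the residual sequence stays sorted; the residual sequence again satisfies the inequalities (the
hardest case uses that the degree sum is even), so it is realized by induction, and the removed
vertex is added back.
-/

def ErdosGallaiAt (len : ℕ) (d : ℕ → ℕ) (l : ℕ) : Prop :=
  ∑ i ∈ range l, d i ≤ l * (l - 1) + ∑ j ∈ Ico l len, min l (d j)

def ErdosGallai (len : ℕ) (d : ℕ → ℕ) : Prop := ∀ l ≤ len, ErdosGallaiAt len d l

def IsGraphical (len : ℕ) (d : ℕ → ℕ) : Prop :=
  ∃ G : SimpleGraph (Fin len), ∃ _ : DecidableRel G.Adj, ∀ i : Fin len, G.degree i = d i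

def countGE (M : ℕ) (h : ℕ → ℕ) (t : ℕ) : ℕ := #{i ∈ range M | t ≤ h i}

section countGE

variable {M : ℕ} {h : ℕ → ℕ}

lemma countGE_le (t : ℕ) : countGE M h t ≤ M :=
  (card_filter_le _ _).trans (card_range M).le

lemma countGE_antitone : Antitone (countGE M h) := fun _ _ hst =>
  card_le_card (monotone_filter_right _ fun _ _ hi => hst.trans hi)

lemma lt_countGE_iff (hh : Antitone h) (hz : ∀ i, M ≤ i → h i = 0) {t : ℕ} (ht : 0 < t)
    {i : ℕ} : i < countGE M h t ↔ t ≤ h i := by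
  constructor
  · intro hi
    by_contra! hlt
    have hsub : {j ∈ range M | t ≤ h j} ⊆ range i := fun j hj => by
      simp only [mem_filter, mem_range] at hj ⊢
      by_contra! hij
      exact absurd (hj.2.trans (hh hij)) (not_le.2 hlt)
    have := card_le_card hsub
    rw [card_range] at this
    exact absurd hi (not_lt.2 this)
  · intro hti
    have hiM : i < M := by
      by_contra! hMi
      have := hz i hMi
      omega
    have hsub : range (i + 1) ⊆ {j ∈ range M | t ≤ h j} := fun j hj => by
      simp only [mem_filter, mem_range] at hj ⊢
      exact ⟨by omega, hti.trans (hh (by omega))⟩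
    simpa [countGE] using card_le_card hsub

end countGE

section ErdosGallaiInequality

variable {M l : ℕ} {f h : ℕ → ℕ} {T : Finset ℕ}

lemma sum_add_card_inter (hfh : ∀ i, f i + (if i ∈ T then 1 else 0) = h i) (s : Finset ℕ) :
    ∑ i ∈ s, f i + #(s ∩ T) = ∑ i ∈ s, h i := by
  rw [← filter_mem_eq_inter, card_filter, ← sum_add_distrib]
  exact sum_congr rfl fun i _ => hfh i

lemma erdosGallaiAt_of_bounded {Q : ℕ} (hlQ : l ≤ Q) (hQM : Q ≤ M)
    (hhead : ∀ i < l, f i + 1 ≤ Q) (htail : ∀ j, l ≤ j → j < Q → l ≤ f j) :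
    ErdosGallaiAt M f l := by
  unfold ErdosGallaiAt
  have hsplit : l * (Q - 1) = l * (l - 1) + (Q - l) * l := by
    obtain ⟨e, rfl⟩ := Nat.exists_eq_add_of_le hlQ
    rcases l with _ | l
    · simp
    · simp only [Nat.add_sub_cancel, add_tsub_cancel_left]
      rw [show l + 1 + e - 1 = l + e by omega]
      ring
  calc ∑ i ∈ range l, f i ≤ ∑ _i ∈ range l, (Q - 1) := sum_le_sum fun i hi => by
        have := hhead i (mem_range.1 hi)
        omega
    _ = l * (l - 1) + ∑ _j ∈ Ico l Q, l := by simp [hsplit]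
    _ ≤ l * (l - 1) + ∑ j ∈ Ico l Q, min l (f j) := by
        gcongr with j hj
        exact le_min le_rfl (htail j (mem_Ico.1 hj).1 (mem_Ico.1 hj).2)
    _ ≤ l * (l - 1) + ∑ j ∈ Ico l M, min l (f j) := by
        gcongr

lemma erdosGallaiAt_of_even (hlM : l ≤ M) (hsmall : ∀ j, l ≤ j → f j ≤ l)
    (heven : Even (∑ i ∈ range M, f i))
    (hle : 2 * ∑ i ∈ range l, f i ≤ l * (l - 1) + ∑ i ∈ range M, f i + 1) :
    ErdosGallaiAt M f l := by
  unfold ErdosGallaiAt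
  have htail : ∑ j ∈ Ico l M, min l (f j) = ∑ j ∈ Ico l M, f j :=
    sum_congr rfl fun j hj => min_eq_right (hsmall j (mem_Ico.1 hj).1)
  rw [htail]
  rw [← sum_range_add_sum_Ico _ hlM] at heven hle
  -- both sides differ by an even number, so the slack `+ 1` is never needed
  obtain ⟨a, ha⟩ := heven
  obtain ⟨b, hb⟩ := Nat.even_mul_pred_self l
  omega

lemma erdosGallaiAt_of_range_subset {r : ℕ}
    (hfh : ∀ i, f i + (if i ∈ T then 1 else 0) = h i) (hTM : T ⊆ range M) (hTr : #T = r)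
    (hlT : range l ⊆ T) (hout : ∀ j ∉ T, h j ≤ l)
    (hEG : r + ∑ i ∈ range l, h i ≤ (l + 1) * l + ∑ j ∈ Ico l M, min (l + 1) (h j)) :
    ErdosGallaiAt M f l := by
  unfold ErdosGallaiAt
  have hlM : l ≤ M := by simpa using card_le_card (hlT.trans hTM)
  have hhead := sum_add_card_inter hfh (range l)
  rw [inter_eq_left.2 hlT, card_range] at hhead
  have hcard : #(range l ∩ T) + #(Ico l M ∩ T) = r := by
    simp only [← filter_mem_eq_inter, card_filter]
    rw [sum_range_add_sum_Ico _ hlM, ← card_filter, filter_mem_eq_inter, inter_eq_right.2 hTM,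
      hTr]
  rw [inter_eq_left.2 hlT, card_range] at hcard
  have hpoint : ∀ j ∈ Ico l M,
      min (l + 1) (h j) ≤ min l (f j) + if j ∈ T then 1 else 0 := fun j _ => by
    have hfhj := hfh j
    by_cases hj : j ∈ T
    · simp only [hj, if_true] at hfhj ⊢
      omega
    · have := hout j hj
      simp only [hj, if_false] at hfhj ⊢
      omega
  have htail := sum_le_sum hpoint
  rw [sum_add_distrib, ← card_filter, filter_mem_eq_inter] at htail
  have hl : (l + 1) * l = l * (l - 1) + 2 * l := by
    rcases l with _ | l
    · simp
    · simp only [Nat.add_sub_cancel]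
      ring
  omega

lemma two_mul_sum_le_of_le_card_range_inter {r : ℕ}
    (hfh : ∀ i, f i + (if i ∈ T then 1 else 0) = h i) (hTM : T ⊆ range M) (hTr : #T = r)
    (hlM : l + 1 ≤ M) (hsmall : ∀ j, l ≤ j → h j ≤ l + 1) (hcard : h l ≤ #(range (l + 1) ∩ T))
    (hEG : r + ∑ i ∈ range l, h i ≤ (l + 1) * l + ∑ j ∈ Ico l M, min (l + 1) (h j)) :
    2 * ∑ i ∈ range (l + 1), f i ≤ (l + 1) * l + ∑ i ∈ range M, f i := by
  have htail : ∑ j ∈ Ico l M, min (l + 1) (h j) = ∑ j ∈ Ico l M, h j :=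
    sum_congr rfl fun j hj => min_eq_right (hsmall j (mem_Ico.1 hj).1)
  have hhead := sum_add_card_inter hfh (range (l + 1))
  have hall := sum_add_card_inter hfh (range M)
  rw [inter_eq_right.2 hTM, hTr] at hall
  have hlM' : l ≤ M := by omega
  rw [sum_range_succ, sum_range_succ] at hhead
  rw [htail] at hEG
  rw [← sum_range_add_sum_Ico h hlM'] at hall
  rw [sum_range_succ]
  omega

lemma two_mul_sum_le_of_block {r P Q v : ℕ}
    (hfh : ∀ i, f i + (if i ∈ T then 1 else 0) = h i) (hTM : T ⊆ range M) (hTr : #T = r)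
    (hle : ∀ i, h i ≤ r) (hblock : ∀ i, P ≤ i → i < Q → h i = v)
    (hPv : P < v) (hvl : v ≤ l) (hlr : l ≤ r) (hrQ : r < Q) (hQM : Q ≤ M)
    (hQa : l + r ≤ Q + #(range l ∩ T)) :
    2 * ∑ i ∈ range l, f i ≤ l * (l - 1) + ∑ i ∈ range M, f i + 1 := by
  set a := #(range l ∩ T)
  set D := ∑ i ∈ range P, h i
  have hD : D ≤ P * r := by simpa using sum_le_sum fun i (_ : i ∈ range P) => hle i
  have hblockSum : ∀ m, P ≤ m → m ≤ Q → ∑ i ∈ range m, h i = D + (m - P) * v := fun m hPm hmQ => by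
    rw [← sum_range_add_sum_Ico _ hPm, sum_congr rfl fun i hi =>
      hblock i (mem_Ico.1 hi).1 ((mem_Ico.1 hi).2.trans_le hmQ), sum_const, Nat.card_Ico,
      smul_eq_mul]
  have hl := hblockSum l (by omega) (by omega)
  have hQ := hblockSum Q (by omega) le_rfl
  have hMQ : ∑ i ∈ range Q, h i ≤ ∑ i ∈ range M, h i :=
    sum_le_sum_of_subset (range_subset_range.2 hQM)
  have hhead := sum_add_card_inter hfh (range l)
  have hall := sum_add_card_inter hfh (range M)
  rw [inter_eq_right.2 hTM, hTr] at hall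
  have key : (D : ℤ) + (2 * l - P - Q) * v + r ≤ l * (l - 1) + 2 * a + 1 := by
    linarith [mul_nonneg (by omega : (0 : ℤ) ≤ r - l) (by omega : (0 : ℤ) ≤ v - 1 - P),
      mul_nonneg (by omega : (0 : ℤ) ≤ l - v) (by omega : (0 : ℤ) ≤ l - P - 1),
      mul_nonneg (by omega : (0 : ℤ) ≤ Q - r - 1) (by omega : (0 : ℤ) ≤ v - 1)]
  zify [show 1 ≤ l by omega, show P ≤ l by omega, show P ≤ Q by omega] at hl hQ hMQ hhead hall hD ⊢
  linarith

end ErdosGallaiInequality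

section Layoff

variable (M : ℕ) (h : ℕ → ℕ) (r : ℕ)

def countAbovePivot : ℕ := countGE M h (h (r - 1) + 1)

def countAtLeastPivot : ℕ := countGE M h (h (r - 1))

/-- One Havel–Hakimi step: a vertex of degree `r` is joined to `r` entries of largest degree.
The smallest degree it reaches is the pivot `h (r - 1)`; the entries above the pivot are `[0, P)`
and those equal to it `[P, Q)`, where `P = countAbovePivot M h r` and `Q = countAtLeastPivot M h r`.
It takes all of `[0, P)` and the *last* `r - P` entries of `[P, Q)`, so that the residual sequence
`layoff M h r` is again antitone. -/
def layoffSet : Finset ℕ :=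
  range (countAbovePivot M h r) ∪
    Ico (countAbovePivot M h r + countAtLeastPivot M h r - r) (countAtLeastPivot M h r)

def layoff (i : ℕ) : ℕ := h i - if i ∈ layoffSet M h r then 1 else 0

variable {M h r}

lemma mem_layoffSet {i : ℕ} : i ∈ layoffSet M h r ↔ i < countAbovePivot M h r ∨
    countAbovePivot M h r + countAtLeastPivot M h r - r ≤ i ∧ i < countAtLeastPivot M h r := by
  simp [layoffSet]

lemma countAbovePivot_le_countAtLeastPivot : countAbovePivot M h r ≤ countAtLeastPivot M h r :=
  countGE_antitone (Nat.le_succ _)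

lemma countAtLeastPivot_le : countAtLeastPivot M h r ≤ M := countGE_le _

lemma layoffSet_subset_range : layoffSet M h r ⊆ range M := fun i hi => by
  have := countAbovePivot_le_countAtLeastPivot (M := M) (h := h) (r := r)
  have := countAtLeastPivot_le (M := M) (h := h) (r := r)
  rw [mem_layoffSet] at hi
  rw [mem_range]
  omega

lemma card_range_inter_layoffSet {l : ℕ} (hrQ : r ≤ countAtLeastPivot M h r)
    (hPl : countAbovePivot M h r ≤ l) (hlQ : l ≤ countAtLeastPivot M h r) :
    #(range l ∩ layoffSet M h r) = countAbovePivot M h r +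
      (l - (countAbovePivot M h r + countAtLeastPivot M h r - r)) := by
  have hset : range l ∩ layoffSet M h r = range (countAbovePivot M h r) ∪
      Ico (countAbovePivot M h r + countAtLeastPivot M h r - r) l := by
    ext i
    simp only [mem_inter, mem_range, mem_union, mem_Ico, mem_layoffSet]
    omega
  rw [hset, card_union_of_disjoint (disjoint_left.2 fun i hi hi' => by
    simp only [mem_range, mem_Ico] at hi hi'
    omega), card_range, Nat.card_Ico]

variable (hh : Antitone h) (hz : ∀ i, M ≤ i → h i = 0)
include hh hz

lemma lt_countAbovePivot_iff {i : ℕ} : i < countAbovePivot M h r ↔ h (r - 1) + 1 ≤ h i :=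
  lt_countGE_iff hh hz (Nat.succ_pos _)

lemma countAbovePivot_lt (hr : 0 < r) : countAbovePivot M h r < r := by
  have := (lt_countAbovePivot_iff hh hz (r := r) (i := r - 1)).not
  omega

variable (hr : 0 < r) (hrM : r ≤ countGE M h 1)
include hr hrM

lemma pivot_pos : 0 < h (r - 1) :=
  (lt_countGE_iff hh hz one_pos).1 (by omega)

lemma lt_countAtLeastPivot_iff {i : ℕ} : i < countAtLeastPivot M h r ↔ h (r - 1) ≤ h i :=
  lt_countGE_iff hh hz (pivot_pos hh hz hr hrM)

lemma le_countAtLeastPivot : r ≤ countAtLeastPivot M h r := by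
  have := (lt_countAtLeastPivot_iff hh hz hr hrM (i := r - 1)).2 le_rfl
  omega

lemma card_layoffSet : #(layoffSet M h r) = r := by
  have hP := countAbovePivot_lt hh hz hr
  have hQ := le_countAtLeastPivot hh hz hr hrM
  rw [layoffSet, card_union_of_disjoint (disjoint_left.2 fun i hi hi' => by
    simp only [mem_range, mem_Ico] at hi hi'
    omega), card_range, Nat.card_Ico]
  omega

lemma layoff_add_ite (i : ℕ) :
    layoff M h r i + (if i ∈ layoffSet M h r then 1 else 0) = h i := by
  unfold layoff
  split_ifs with hi
  · have := countAbovePivot_le_countAtLeastPivot (M := M) (h := h) (r := r)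
    have := (lt_countAtLeastPivot_iff hh hz hr hrM (i := i)).1
      (by rw [mem_layoffSet] at hi; omega)
    have := pivot_pos hh hz hr hrM
    omega
  · rfl

lemma layoff_cases (i : ℕ) :
    (i ∈ layoffSet M h r ∧ layoff M h r i + 1 = h i) ∨
      (i ∉ layoffSet M h r ∧ layoff M h r i = h i) := by
  have := layoff_add_ite hh hz hr hrM i
  by_cases hi : i ∈ layoffSet M h r
  · simp only [hi, if_true] at this
    exact Or.inl ⟨hi, this⟩
  · simp only [hi, if_false, add_zero] at this
    exact Or.inr ⟨hi, this⟩

lemma antitone_layoff : Antitone (layoff M h r) := by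
  intro i j hij
  have hPi := lt_countAbovePivot_iff hh hz (r := r) (i := i)
  have hPj := lt_countAbovePivot_iff hh hz (r := r) (i := j)
  have hQi := lt_countAtLeastPivot_iff hh hz hr hrM (i := i)
  have hQj := lt_countAtLeastPivot_iff hh hz hr hrM (i := j)
  have hPr := countAbovePivot_lt hh hz hr
  have hrQ := le_countAtLeastPivot hh hz hr hrM
  have hmono := hh hij
  -- an entry is only decreased if every later entry of the same degree is decreased too
  rcases layoff_cases hh hz hr hrM i with ⟨hiT, hi⟩ | ⟨hiT, hi⟩ <;>
  rcases layoff_cases hh hz hr hrM j with ⟨hjT, hj⟩ | ⟨hjT, hj⟩ <;>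
  simp only [mem_layoffSet] at hiT hjT <;> omega

lemma erdosGallaiAt_layoff_of_lt_pivot (hle : ∀ i, h i ≤ r) {l : ℕ} (hlv : l < h (r - 1)) :
    ErdosGallaiAt M (layoff M h r) l := by
  have hrQ := le_countAtLeastPivot hh hz hr hrM
  have hvr := hle (r - 1)
  refine erdosGallaiAt_of_bounded (Q := countAtLeastPivot M h r) (by omega) countAtLeastPivot_le
    (fun i _ => ?_) (fun j _ hj => ?_)
  · -- a decreased entry has `h i ≤ r ≤ Q`; an undecreased one has `h i < h (r - 1) ≤ r` or lies
    -- in `[P, P + Q - r)`, which is nonempty only if `r < Q`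
    have := hle i
    have := lt_countAbovePivot_iff hh hz (r := r) (i := i)
    have := lt_countAtLeastPivot_iff hh hz hr hrM (i := i)
    rcases layoff_cases hh hz hr hrM i with ⟨-, hi⟩ | ⟨hiT, hi⟩
    · omega
    · rw [mem_layoffSet] at hiT
      omega
  · have := (lt_countAtLeastPivot_iff hh hz hr hrM).1 hj
    rcases layoff_cases hh hz hr hrM j with ⟨-, hj⟩ | ⟨-, hj⟩ <;> omega

lemma erdosGallaiAt_layoff_of_range_subset {l : ℕ} (hvl : h (r - 1) ≤ l) (hlr : l ≤ r)
    (hC : l ≤ countAbovePivot M h r ∨ countAtLeastPivot M h r = r)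
    (hEG : r + ∑ i ∈ range l, h i ≤ (l + 1) * l + ∑ j ∈ Ico l M, min (l + 1) (h j)) :
    ErdosGallaiAt M (layoff M h r) l := by
  refine erdosGallaiAt_of_range_subset (layoff_add_ite hh hz hr hrM) layoffSet_subset_range
    (card_layoffSet hh hz hr hrM) (fun i hi => ?_) (fun j hj => ?_) hEG
  · rw [mem_range] at hi
    rw [mem_layoffSet]
    omega
  · have := lt_countAbovePivot_iff hh hz (r := r) (i := j)
    rw [mem_layoffSet] at hj
    omega

lemma erdosGallaiAt_layoff_of_lt (hle : ∀ i, h i ≤ r) {l : ℕ} (hlM : l ≤ M)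
    (hvl : h (r - 1) ≤ l) (hlr : l ≤ r) (hPl : countAbovePivot M h r < l)
    (hrQ : r < countAtLeastPivot M h r)
    (hEG : ∀ l ≤ M, r + ∑ i ∈ range l, h i ≤ (l + 1) * l + ∑ j ∈ Ico l M, min (l + 1) (h j))
    (heven : Even (r + ∑ i ∈ range M, h i)) : ErdosGallaiAt M (layoff M h r) l := by
  have hP : ∀ i, i < countAbovePivot M h r ↔ h (r - 1) + 1 ≤ h i := fun i =>
    lt_countAbovePivot_iff hh hz
  have hfh := layoff_add_ite hh hz hr hrM
  have hTM : layoffSet M h r ⊆ range M := layoffSet_subset_range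
  have hTr := card_layoffSet hh hz hr hrM
  have hsmall : ∀ j, l ≤ j → layoff M h r j ≤ l := fun j hj => by
    have := hP j
    rcases layoff_cases hh hz hr hrM j with ⟨-, hj'⟩ | ⟨-, hj'⟩ <;> omega
  have hfeven : Even (∑ i ∈ range M, layoff M h r i) := by
    have hall := sum_add_card_inter hfh (range M)
    rw [inter_eq_right.2 hTM, hTr] at hall
    obtain ⟨k, hk⟩ := heven
    exact ⟨k - r, by omega⟩
  refine erdosGallaiAt_of_even hlM hsmall hfeven ?_
  have hcard := card_range_inter_layoffSet hrQ.le hPl.le (by omega : l ≤ countAtLeastPivot M h r)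
  rcases le_or_gt (h (r - 1)) (countAbovePivot M h r) with hvP | hPv
  · obtain ⟨l, rfl⟩ : ∃ l', l = l' + 1 := ⟨l - 1, by omega⟩
    have := two_mul_sum_le_of_le_card_range_inter hfh hTM hTr hlM
      (fun j hj => by have := hP j; omega) (by have := hP l; omega) (hEG l (by omega))
    rw [Nat.add_sub_cancel]
    omega
  · refine two_mul_sum_le_of_block hfh hTM hTr hle (fun i h1 h2 => ?_) hPv hvl hlr hrQ
      countAtLeastPivot_le (by omega)
    have := hP i
    have := (lt_countAtLeastPivot_iff hh hz hr hrM).1 h2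
    omega

/-- `hEG` is the Erdős–Gallai inequality of the sequence `r, h 0, h 1, …` at `l + 1`. -/
theorem erdosGallai_layoff (hle : ∀ i, h i ≤ r)
    (hEG : ∀ l ≤ M, r + ∑ i ∈ range l, h i ≤ (l + 1) * l + ∑ j ∈ Ico l M, min (l + 1) (h j))
    (heven : Even (r + ∑ i ∈ range M, h i)) : ErdosGallai M (layoff M h r) := by
  intro l hlM
  rcases lt_or_ge r l with hrl | hlr
  · refine erdosGallaiAt_of_bounded le_rfl hlM (fun i _ => ?_) (fun j h1 h2 => by omega)
    have := hle i
    rcases layoff_cases hh hz hr hrM i with ⟨-, hi⟩ | ⟨-, hi⟩ <;> omega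
  rcases lt_or_ge l (h (r - 1)) with hlv | hvl
  · exact erdosGallaiAt_layoff_of_lt_pivot hh hz hr hrM hle hlv
  by_cases hC : l ≤ countAbovePivot M h r ∨ countAtLeastPivot M h r = r
  · exact erdosGallaiAt_layoff_of_range_subset hh hz hr hrM hvl hlr hC (hEG l hlM)
  push Not at hC
  exact erdosGallaiAt_layoff_of_lt hh hz hr hrM hle hlM hvl hlr hC.1
    (lt_of_le_of_ne (le_countAtLeastPivot hh hz hr hrM) hC.2.symm) hEG heven

end Layoff

namespace SimpleGraph

variable {M : ℕ} (G : SimpleGraph (Fin M)) (T : Finset ℕ)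

def consVertex : SimpleGraph (Fin (M + 1)) where
  Adj a b := Fin.cases (Fin.cases False (fun j => (j : ℕ) ∈ T) b)
    (fun i => Fin.cases ((i : ℕ) ∈ T) (G.Adj i) b) a
  symm := ⟨fun a b => by
    refine Fin.cases ?_ (fun i => ?_) a <;> refine Fin.cases ?_ (fun j => ?_) b <;>
      simp [G.adj_comm]⟩
  loopless := ⟨fun a => by refine Fin.cases ?_ (fun i => ?_) a <;> simp⟩

@[simp] lemma consVertex_adj_zero_succ (j : Fin M) :
    (G.consVertex T).Adj 0 j.succ ↔ (j : ℕ) ∈ T := Iff.rfl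

@[simp] lemma consVertex_adj_succ_zero (i : Fin M) :
    (G.consVertex T).Adj i.succ 0 ↔ (i : ℕ) ∈ T := Iff.rfl

@[simp] lemma consVertex_adj_succ_succ (i j : Fin M) :
    (G.consVertex T).Adj i.succ j.succ ↔ G.Adj i j := Iff.rfl

variable [DecidableRel (G.consVertex T).Adj]

lemma consVertex_degree_zero (hT : T ⊆ range M) : (G.consVertex T).degree 0 = #T := by
  rw [degree, neighborFinset_eq_filter, card_filter, Fin.sum_univ_succ]
  simp only [SimpleGraph.irrefl, if_false, zero_add, consVertex_adj_zero_succ]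
  rw [Fin.sum_univ_eq_sum_range (fun j => if j ∈ T then 1 else 0) M, ← card_filter,
    filter_mem_eq_inter, inter_eq_right.2 hT]

lemma consVertex_degree_succ [DecidableRel G.Adj] (i : Fin M) :
    (G.consVertex T).degree i.succ = G.degree i + if (i : ℕ) ∈ T then 1 else 0 := by
  rw [degree, neighborFinset_eq_filter, card_filter, Fin.sum_univ_succ, degree,
    neighborFinset_eq_filter, card_filter, add_comm]
  simp only [consVertex_adj_succ_zero, consVertex_adj_succ_succ]

end SimpleGraph

lemma IsGraphical.cons {M : ℕ} {f d : ℕ → ℕ} {T : Finset ℕ} (hf : IsGraphical M f)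
    (hT : T ⊆ range M) (h0 : d 0 = #T) (hsucc : ∀ i, d (i + 1) = f i + if i ∈ T then 1 else 0) :
    IsGraphical (M + 1) d := by
  classical
  obtain ⟨G, _, hG⟩ := hf
  refine ⟨G.consVertex T, inferInstance, Fin.cases ?_ fun i => ?_⟩
  · rw [G.consVertex_degree_zero T hT, Fin.val_zero, h0]
  · rw [G.consVertex_degree_succ T i, hG, Fin.val_succ, hsucc]

lemma ErdosGallai.ineq_succ {M : ℕ} {d : ℕ → ℕ} (hEG : ErdosGallai (M + 1) d) (l : ℕ) (hl : l ≤ M) :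
    d 0 + ∑ i ∈ range l, d (i + 1) ≤
      (l + 1) * l + ∑ j ∈ Ico l M, min (l + 1) (d (j + 1)) := by
  have := hEG (l + 1) (by omega)
  rw [ErdosGallaiAt, sum_range_succ', Nat.add_sub_cancel,
    ← sum_Ico_add' (fun j => min (l + 1) (d j))] at this
  omega

lemma ErdosGallai.head_le_countGE {M : ℕ} {d : ℕ → ℕ} (hEG : ErdosGallai (M + 1) d) :
    d 0 ≤ countGE M (fun i => d (i + 1)) 1 := by
  have := hEG.ineq_succ 0 M.zero_le
  simp only [range_zero, sum_empty, add_zero, mul_zero, zero_add, ← range_eq_Ico] at this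
  rw [countGE, card_filter]
  exact this.trans_eq (sum_congr rfl fun j _ => by split_ifs <;> omega)

theorem isGraphical_of_erdosGallai {M : ℕ} {d : ℕ → ℕ} (hd : Antitone d)
    (hz : ∀ i, M ≤ i → d i = 0) (heven : Even (∑ i ∈ range M, d i)) (hEG : ErdosGallai M d) :
    IsGraphical M d := by
  induction hS : ∑ i ∈ range M, d i using Nat.strong_induction_on generalizing M d with
  | _ S IH =>
    rcases M with _ | M
    · exact ⟨⊥, inferInstance, fun i => i.elim0⟩
    set h : ℕ → ℕ := fun i => d (i + 1)
    have hh : Antitone h := fun i j hij => hd (by omega)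
    have hzh : ∀ i, M ≤ i → h i = 0 := fun i hi => hz (i + 1) (by omega)
    have hsum : d 0 + ∑ i ∈ range M, h i = S := by rw [← hS, sum_range_succ', add_comm]
    rcases Nat.eq_zero_or_pos (d 0) with hr | hr
    · refine ⟨⊥, inferInstance, fun i => ?_⟩
      have := hd (Nat.zero_le i)
      rw [SimpleGraph.bot_degree]
      omega
    have hrM : d 0 ≤ countGE M h 1 := hEG.head_le_countGE
    have hfh := layoff_add_ite hh hzh hr hrM
    have hall := sum_add_card_inter hfh (range M)
    rw [inter_eq_right.2 layoffSet_subset_range, card_layoffSet hh hzh hr hrM] at hall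
    have hevenh : Even (d 0 + ∑ i ∈ range M, h i) := by rwa [hsum, ← hS]
    have hEGf := erdosGallai_layoff hh hzh hr hrM (fun i => hd (Nat.zero_le _)) hEG.ineq_succ hevenh
    obtain ⟨k, hk⟩ := heven
    refine (IH _ (by omega) (antitone_layoff hh hzh hr hrM) (fun i hi => ?_) ⟨k - d 0, by omega⟩
      hEGf rfl).cons layoffSet_subset_range (card_layoffSet hh hzh hr hrM).symm fun i => ?_
    · simp [layoff, hzh i hi]
    · exact (hfh i).symm

theorem erdosGallai_of_sq_add_four_mul_lt {M Δ : ℕ} {d : ℕ → ℕ} (hd : Antitone d)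
    (hz : ∀ i, M ≤ i → d i = 0) (hΔ : ∀ i, d i ≤ Δ) (hm : Δ ^ 2 + 4 * Δ < 4 * countGE M d 1) :
    ErdosGallai M d := by
  intro l hlM
  rcases lt_or_ge Δ l with hΔl | hlΔ
  · exact erdosGallaiAt_of_bounded le_rfl hlM (fun i _ => by have := hΔ i; omega)
      (fun j h1 h2 => by omega)
  rcases Nat.eq_zero_or_pos l with rfl | hl
  · simp [ErdosGallaiAt]
  unfold ErdosGallaiAt
  set m := countGE M d 1
  -- `l (Δ + 2 - l) ≤ (Δ + 2)² / 4`
  have hquad : l * Δ + l ≤ l * (l - 1) + m := by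
    obtain ⟨k, rfl⟩ : ∃ k, l = k + 1 := ⟨l - 1, by omega⟩
    rw [Nat.add_sub_cancel]
    have : 4 * ((k + 1) * Δ + (k + 1)) ≤ 4 * ((k + 1) * k + m) + 3 := by
      zify at hm ⊢
      nlinarith [sq_nonneg ((Δ : ℤ) - 2 * k)]
    omega
  have htail : m - l ≤ ∑ j ∈ Ico l M, min l (d j) :=
    calc m - l = ∑ _j ∈ Ico l m, 1 := by simp
      _ ≤ ∑ j ∈ Ico l m, min l (d j) := sum_le_sum fun j hj =>
          le_min hl ((lt_countGE_iff hd hz one_pos).1 (mem_Ico.1 hj).2)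
      _ ≤ ∑ j ∈ Ico l M, min l (d j) :=
          sum_le_sum_of_subset (Ico_subset_Ico le_rfl (countGE_le 1))
  calc ∑ i ∈ range l, d i ≤ ∑ _i ∈ range l, Δ := sum_le_sum fun i _ => hΔ i
    _ = l * Δ := by simp
    _ ≤ l * (l - 1) + ∑ j ∈ Ico l M, min l (d j) := by omega

theorem exists_simpleGraph_of_sq_add_four_mul_lt {N Δ : ℕ} (g : Fin N → ℕ) (hg : Antitone g)
    (heven : Even (∑ i, g i)) (hΔ : ∀ i, g i ≤ Δ) (hm : Δ ^ 2 + 4 * Δ < 4 * #{i | g i ≠ 0}) :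
    ∃ G : SimpleGraph (Fin N), ∃ _ : DecidableRel G.Adj, ∀ i, G.degree i = g i := by
  let d : ℕ → ℕ := fun i => if hi : i < N then g ⟨i, hi⟩ else 0
  have hdg : ∀ i : Fin N, d i = g i := fun i => dif_pos i.isLt
  have hd : Antitone d := fun i j hij => by
    by_cases hj : j < N
    · simp only [d, dif_pos hj, dif_pos (hij.trans_lt hj)]
      exact hg hij
    · simp [d, hj]
  have hz : ∀ i, N ≤ i → d i = 0 := fun i hi => dif_neg (by omega)
  have hdΔ : ∀ i, d i ≤ Δ := fun i => by
    by_cases hi : i < N <;> simp [d, hi, hΔ]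
  have hsum : ∑ i ∈ range N, d i = ∑ i, g i := by
    rw [← Fin.sum_univ_eq_sum_range]
    simp [hdg]
  have hcount : countGE N d 1 = #{i | g i ≠ 0} := by
    rw [countGE, card_filter, card_filter,
      ← Fin.sum_univ_eq_sum_range (fun i => if 1 ≤ d i then 1 else 0)]
    simp [hdg, Nat.one_le_iff_ne_zero]
  obtain ⟨G, _, hG⟩ := isGraphical_of_erdosGallai hd hz (hsum ▸ heven)
    (erdosGallai_of_sq_add_four_mul_lt hd hz hdΔ (hcount ▸ hm))
  exact ⟨G, inferInstance, fun i => (hG i).trans (hdg i)⟩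

lemma Real.log_lt_three_quarters_mul_sqrt {x : ℝ} (hx : 0 < x) : log x < 3 / 4 * √x := by
  set y := √x
  have hy : 0 < y := Real.sqrt_pos.2 hx
  have hlogx : log x = 2 * log y := by
    rw [← Real.log_rpow hy, Real.rpow_two, Real.sq_sqrt hx.le]
  -- `log y - 3 y / 8` is maximal at `y = 8 / 3`, where it equals `log (8 / 3) - 1 < 0`.
  have htangent : log (3 / 8 * y) ≤ 3 / 8 * y - 1 := Real.log_le_sub_one_of_pos (by positivity)
  have hlog83 : log (8 / 3) < 1 := by
    rw [Real.log_lt_iff_lt_exp (by norm_num)]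
    linarith [Real.exp_one_gt_d9]
  rw [Real.log_mul (by norm_num) hy.ne', show (3 / 8 : ℝ) = (8 / 3)⁻¹ by norm_num,
    Real.log_inv] at htangent
  linarith

theorem exists_simpleGraph_of_degree_sequence_general
    (k : ℕ) (n n' : ℕ)
    (hn' : (n : ℝ) - Real.log n ≤ (n' : ℝ))
    (g : Fin n' → ℕ) (hsorted : Antitone g)
    (heven : Even (∑ i, g i))
    (hmax : ∀ i, (g i : ℝ) ≤ (n : ℝ) ^ ((1 : ℝ) / 4))
    (hzeros : ((Finset.univ.filter fun i => g i = 0).card : ℝ) ≤ (k : ℝ) * Real.log n)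
    (hbig : Real.sqrt n < (n : ℝ) - (n : ℝ) ^ ((1 : ℝ) / 4) - (k : ℝ) * Real.log n) :
    ∃ G : SimpleGraph (Fin n'), ∃ _ : DecidableRel G.Adj, ∀ i, G.degree i = g i := by
  have hn : (0 : ℝ) < n := by
    rcases Nat.eq_zero_or_pos n with rfl | hn
    · norm_num at hbig
    · exact_mod_cast hn
  set A := (n : ℝ) ^ ((1 : ℝ) / 4)
  have hA2 : A ^ 2 = √n := by
    rw [← Real.rpow_natCast, ← Real.rpow_mul hn.le, Real.sqrt_eq_rpow]
    norm_num
  have hlog := Real.log_lt_three_quarters_mul_sqrt hn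
  have hcard : (#{i | g i ≠ 0} : ℝ) + #{i | g i = 0} = n' := by
    have := card_filter_add_card_filter_not (s := univ) (fun i => g i ≠ 0)
    simp only [not_not, card_univ, Fintype.card_fin] at this
    exact_mod_cast this
  have hΔ : (⌊A⌋₊ : ℝ) ≤ A := Nat.floor_le (by positivity)
  have hΔ2 : (⌊A⌋₊ : ℝ) ^ 2 ≤ √n := hA2 ▸ pow_le_pow_left₀ (Nat.cast_nonneg _) hΔ 2
  refine exists_simpleGraph_of_sq_add_four_mul_lt g hsorted heven
    (fun i => Nat.le_floor (hmax i)) ?_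
  exact_mod_cast (show ((⌊A⌋₊ : ℕ) : ℝ) ^ 2 + 4 * ⌊A⌋₊ < 4 * #{i | g i ≠ 0} by linarith)

/-- Lemma on graphical sequences: if `n' ≥ n - log n`, the integers
`g_1 ≥ … ≥ g_{n'} ≥ 0` have even sum, `g_1 ≤ n^{1/4}`, at most `k log n` of them are `0`,
and `n` is large enough that `n - n^{1/4} - k log n > √n`, then there is a simple graph
on `n'` vertices with degree sequence `g`. -/
theorem exists_simpleGraph_of_degree_sequence
    (k : ℕ) (hk : 3 ≤ k) (n n' : ℕ)
    (hn' : (n : ℝ) - Real.log n ≤ (n' : ℝ))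
    (g : Fin n' → ℕ) (hsorted : Antitone g)
    (heven : Even (∑ i, g i))
    (hmax : ∀ i, (g i : ℝ) ≤ (n : ℝ) ^ ((1 : ℝ) / 4))
    (hzeros : ((Finset.univ.filter fun i => g i = 0).card : ℝ) ≤ (k : ℝ) * Real.log n)
    (hbig : Real.sqrt n < (n : ℝ) - (n : ℝ) ^ ((1 : ℝ) / 4) - (k : ℝ) * Real.log n) :
    ∃ G : SimpleGraph (Fin n'), ∃ _ : DecidableRel G.Adj, ∀ i, G.degree i = g i :=
  exists_simpleGraph_of_degree_sequence_general k n n' hn' g hsorted heven hmax hzeros hbig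
end
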